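/- arXiv:1210.4101 — 6 statements merged into one kernel-verified Lean document; each statement's English description precedes it below -/
import Mathlib

section
/- Let k ≥ 2 and n ≥ 3 be integers. Then the number of prime factors of F_n^{(k)} counted with multiplicity is at most n − 2; in particular, every exponent in the prime factorization of F_n^{(k)} is at most n − 2. -/
/-- Auxiliary sequence: `gfib k i` is the `k`-generalized Fibonacci sequence re-indexed so that
index `i` corresponds to `n = i - (k - 2)`; i.e. `gfib k i = 0` for `i < k - 1`,
`gfib k (k-1) = 1`, and each later term is the sum of the `k` preceding terms. -/
def gfib (k : ℕ) (i : ℕ) : ℕ :=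
  if _h1 : k < 2 then 0
  else if _h2 : i + 1 < k then 0
  else if _h3 : i + 1 = k then 1
  else ∑ j ∈ Finset.range k, gfib k (i - 1 - j)
decreasing_by omega

/-- `genFib k n` is the `n`-th `k`-generalized Fibonacci number `F_n^{(k)}` (for `n ≥ 0`):
`F_0 = ⋯ = 0`, `F_1 = 1` and `F_n = F_{n-1} + ⋯ + F_{n-k}`. -/
def genFib (k : ℕ) (n : ℕ) : ℕ := gfib k (n + k - 2)

/-- `P m`: the largest prime factor of `m`, with `P 0 = P 1 = 1`. -/
def largestPrimeFactor (m : ℕ) : ℕ := max 1 (m.primeFactors.sup id)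

/-- The characteristic polynomial `Ψ_k(x) = x^k - x^{k-1} - ⋯ - x - 1` as a function. -/
def psiFun {R : Type*} [CommRing R] (k : ℕ) (x : R) : R := x ^ k - ∑ i ∈ Finset.range k, x ^ i

/-- `f_k(x) = (x - 1)/(2 + (k+1)(x-2))`. -/
noncomputable def fk (k : ℕ) (x : ℝ) : ℝ := (x - 1) / (2 + (k + 1) * (x - 2))

/-!
Each term of the sequence is the previous term plus the `k - 1` terms before it, and those
sum to at most the previous term; so the sequence at most doubles at each step and
`F_n^{(k)} ≤ 2^(n-2)` from `F_2^{(k)} = 1` on. A positive integer with `Ω` prime factors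
(counted with multiplicity) is at least `2^Ω`, hence `Ω(F_n^{(k)}) ≤ n - 2`, and every exponent
is bounded by `Ω`.
-/

open Finset

namespace Nat

theorem length_primeFactorsList_le_of_le_two_pow {m b : ℕ} (h : m ≤ 2 ^ b) :
    m.primeFactorsList.length ≤ b := by
  rcases eq_or_ne m 0 with rfl | hm
  · simp
  have : 2 ^ m.primeFactorsList.length ≤ m :=
    calc 2 ^ m.primeFactorsList.length ≤ m.primeFactorsList.prod :=
          List.pow_card_le_prod _ _ fun _ hp => (prime_of_mem_primeFactorsList hp).two_le
      _ = m := prod_primeFactorsList hm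
  exact (Nat.pow_le_pow_iff_right one_lt_two).mp (this.trans h)

theorem factorization_le_length_primeFactorsList (m p : ℕ) :
    m.factorization p ≤ m.primeFactorsList.length := by
  rw [← primeFactorsList_count_eq]
  exact List.count_le_length

end Nat

section gfib

variable {k : ℕ}

theorem gfib_of_lt {i : ℕ} (h : i + 1 < k) : gfib k i = 0 := by
  rw [gfib]; split_ifs <;> simp_all

theorem gfib_sub_one (hk : 2 ≤ k) : gfib k (k - 1) = 1 := by
  rw [gfib]; split_ifs <;> omega

theorem gfib_eq_sum (hk : 2 ≤ k) {i : ℕ} (hi : k ≤ i) :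
    gfib k i = ∑ j ∈ range k, gfib k (i - 1 - j) := by
  rw [gfib]; split_ifs <;> omega

theorem gfib_self (hk : 2 ≤ k) : gfib k k = 1 := by
  rw [gfib_eq_sum hk le_rfl, sum_eq_single 0]
  · simpa using gfib_sub_one hk
  · intro j _ hj
    exact gfib_of_lt (by omega)
  · simp only [mem_range]; omega

theorem gfib_succ_le_two_mul (hk : 2 ≤ k) {i : ℕ} (hi : k ≤ i) :
    gfib k (i + 1) ≤ 2 * gfib k i := by
  obtain ⟨m, rfl⟩ : ∃ m, k = m + 1 := ⟨k - 1, by omega⟩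
  have split_first : gfib (m + 1) (i + 1) =
      ∑ j ∈ range m, gfib (m + 1) (i - 1 - j) + gfib (m + 1) i := by
    rw [gfib_eq_sum hk (by omega), sum_range_succ']
    congr 1
    exact sum_congr rfl fun j _ => congrArg _ (by omega)
  have rest_le : ∑ j ∈ range m, gfib (m + 1) (i - 1 - j) ≤ gfib (m + 1) i := by
    rw [gfib_eq_sum hk hi]
    exact sum_le_sum_of_subset (range_subset_range.2 (by omega))
  omega

theorem gfib_add_le_two_pow (hk : 2 ≤ k) (s : ℕ) : gfib k (k + s) ≤ 2 ^ s := by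
  induction s with
  | zero => simp [gfib_self hk]
  | succ s ih =>
    calc gfib k (k + s + 1) ≤ 2 * gfib k (k + s) := gfib_succ_le_two_mul hk (by omega)
      _ ≤ 2 ^ (s + 1) := by rw [pow_succ']; omega

end gfib

theorem genFib_le_two_pow {k n : ℕ} (hk : 2 ≤ k) (hn : 2 ≤ n) :
    genFib k n ≤ 2 ^ (n - 2) := by
  rw [genFib, show n + k - 2 = k + (n - 2) by omega]
  exact gfib_add_le_two_pow hk _

/-- For `k ≥ 2` and `n ≥ 3`, the number of prime factors of `F_n^{(k)}` counted with
multiplicity is at most `n - 2`; in particular every exponent in the prime factorization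
of `F_n^{(k)}` is at most `n - 2`. -/
theorem genFib_primeFactors_count_le (k n : ℕ) (hk : 2 ≤ k) (hn : 3 ≤ n) :
    (genFib k n).primeFactorsList.length ≤ n - 2 ∧
    ∀ p : ℕ, (genFib k n).factorization p ≤ n - 2 := by
  have hlen : (genFib k n).primeFactorsList.length ≤ n - 2 :=
    Nat.length_primeFactorsList_le_of_le_two_pow (genFib_le_two_pow hk (by omega))
  exact ⟨hlen, fun p => (Nat.factorization_le_length_primeFactorsList _ p).trans hlen⟩
end

section
/- Let k ≥ 3 be an integer and let z be a complex root of Ψ_k with |z| < 1. Then |2 + (k+1)(z − 2)| > k − 1. -/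
theorem abs_denom_gt_general (k : ℕ) (z : ℂ)
    (hz : ‖z‖ < 1) :
    ‖(2 + (k + 1 : ℂ) * (z - 2))‖ > (k : ℝ) - 1 := by
  have hnorm_two_k : ‖(2 * k : ℂ)‖ = 2 * k := by exact_mod_cast Complex.norm_natCast (2 * k)
  have hnorm_k_succ : ‖(k + 1 : ℂ)‖ = k + 1 := by exact_mod_cast Complex.norm_natCast (k + 1)
  calc (k : ℝ) - 1 = ‖(2 * k : ℂ)‖ - ‖(k + 1 : ℂ)‖ * 1 := by rw [hnorm_two_k, hnorm_k_succ]; ring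
    _ < ‖(2 * k : ℂ)‖ - ‖(k + 1 : ℂ)‖ * ‖z‖ := by rw [hnorm_k_succ]; gcongr
    _ = ‖(2 * k : ℂ)‖ - ‖(k + 1 : ℂ) * z‖ := by rw [norm_mul (k + 1 : ℂ) z]
    _ ≤ ‖(2 * k : ℂ) - (k + 1) * z‖ := norm_sub_norm_le _ _
    _ = ‖2 + (k + 1 : ℂ) * (z - 2)‖ := by rw [← norm_neg]; ring_nf

/-- For `k ≥ 3`, any complex root `z` of `Ψ_k` with `|z| < 1` satisfies
`|2 + (k+1)(z-2)| > k - 1`. -/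
theorem abs_denom_gt (k : ℕ) (hk : 3 ≤ k) (z : ℂ) (hroot : psiFun k z = 0)
    (hz : ‖z‖ < 1) :
    ‖(2 + (k + 1 : ℂ) * (z - 2))‖ > (k : ℝ) - 1 :=
  abs_denom_gt_general k z hz
end

section
/- Let k ≥ 2 be an integer and let z be any complex root of Ψ_k. Then |z − 1| < |2 + (k+1)(z − 2)|; in other words, |(z − 1)/(2 + (k+1)(z − 2))| < 1. -/
/-!
A root `z` of `Ψ_k` satisfies `z ^ k * (2 - z) = 1`. If `|(k+1)z - 2k| ≤ |z - 1|` held, then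
`a = Re z` would satisfy `|(k+1)a - 2k| ≤ |a - 1|`, which forces `1 < a ≤ 2 - 1/k`. For such `a`
the strict Bernoulli inequality gives `a ^ k * (2 - a) > (1 + k(a - 1))(2 - a) ≥ 1`, while
`|z| ≥ a` and `|2 - z| ≥ 2 - a` give `a ^ k * (2 - a) ≤ |z ^ k * (2 - z)| = 1`.
-/

theorem pow_mul_two_sub_eq_one_of_psiFun_eq_zero {R : Type*} [CommRing R] {k : ℕ} {x : R}
    (hx : psiFun k x = 0) : x ^ k * (2 - x) = 1 := by
  have hsum : ∑ i ∈ Finset.range k, x ^ i = x ^ k := by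
    unfold psiFun at hx
    linear_combination -hx
  have := geom_sum_mul x k
  rw [hsum] at this
  linear_combination -this

theorem one_lt_pow_mul_two_sub {k : ℕ} (hk : 2 ≤ k) {x : ℝ} (h1 : 1 < x)
    (h2 : k * x ≤ 2 * k - 1) : 1 < x ^ k * (2 - x) := by
  have hk' : (2 : ℝ) ≤ k := by exact_mod_cast hk
  have hB : 1 + k * (x - 1) < x ^ k := by
    have := one_add_mul_self_lt_rpow_one_add (by linarith : -1 ≤ x - 1) (sub_pos.2 h1).ne'
      (by linarith : (1 : ℝ) < k)
    rwa [add_sub_cancel, Real.rpow_natCast] at this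
  have hx2 : 0 < 2 - x := by nlinarith
  calc 1 ≤ (1 + k * (x - 1)) * (2 - x) := by nlinarith
    _ < x ^ k * (2 - x) := by gcongr

theorem one_lt_re_and_mul_re_le_of_norm_le {c : ℝ} (hc : 1 < c) {z : ℂ}
    (h : ‖2 + (c + 1) * (z - 2)‖ ≤ ‖z - 1‖) : 1 < z.re ∧ c * z.re ≤ 2 * c - 1 := by
  have hsq := pow_le_pow_left₀ (norm_nonneg _) h 2
  simp only [Complex.sq_norm, Complex.normSq_apply, Complex.add_re, Complex.add_im,
    Complex.mul_re, Complex.mul_im, Complex.sub_re, Complex.sub_im, Complex.ofReal_re,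
    Complex.ofReal_im, Complex.one_re, Complex.one_im, Complex.re_ofNat, Complex.im_ofNat] at hsq
  -- `((c+1)a - 2c)^2 - (a-1)^2` factors as below, and the imaginary parts only help as `c + 1 ≥ 1`.
  have hfactor : (c * z.re - (2 * c - 1)) * ((c + 2) * z.re - (2 * c + 1)) ≤ 0 := by
    nlinarith [mul_nonneg (by positivity : (0 : ℝ) ≤ c * (c + 2)) (sq_nonneg z.im)]
  rcases mul_nonpos_iff.1 hfactor with ⟨hq, hp⟩ | ⟨hq, hp⟩
  · nlinarith
  · exact ⟨by nlinarith, by linarith⟩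

theorem re_pow_mul_two_sub_le_norm {z : ℂ} (h0 : 0 ≤ z.re) (h2 : z.re ≤ 2) (k : ℕ) :
    z.re ^ k * (2 - z.re) ≤ ‖z ^ k * (2 - z)‖ := by
  rw [norm_mul, norm_pow]
  have hre : 2 - z.re ≤ ‖2 - z‖ := by simpa using Complex.re_le_norm (2 - z)
  gcongr
  exact Complex.re_le_norm z

/-- For `k ≥ 2`, every complex root `z` of `Ψ_k` satisfies
`|z - 1| < |2 + (k+1)(z-2)|`, i.e. `|(z-1)/(2 + (k+1)(z-2))| < 1`. -/
theorem abs_num_lt_abs_denom (k : ℕ) (hk : 2 ≤ k) (z : ℂ) (hroot : psiFun k z = 0) :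
    ‖z - 1‖ < ‖2 + (k + 1 : ℂ) * (z - 2)‖ ∧
    ‖(z - 1) / (2 + (k + 1 : ℂ) * (z - 2))‖ < 1 := by
  have hlt : ‖z - 1‖ < ‖2 + (k + 1 : ℂ) * (z - 2)‖ := by
    by_contra! hle
    have hk' : (2 : ℝ) ≤ k := by exact_mod_cast hk
    obtain ⟨h1, h2⟩ :=
      one_lt_re_and_mul_re_le_of_norm_le (c := k) (by linarith) (by simpa using hle)
    have hnorm := re_pow_mul_two_sub_le_norm (by linarith) (by nlinarith) k
    rw [pow_mul_two_sub_eq_one_of_psiFun_eq_zero hroot, norm_one] at hnorm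
    linarith [one_lt_pow_mul_two_sub hk h1 h2]
  refine ⟨hlt, ?_⟩
  rw [norm_div, div_lt_one ((norm_nonneg _).trans_lt hlt)]
  exact hlt
end

section
/- Let k ≥ 2 be an integer and let α_1, …, α_k be the complex roots of Ψ_k. Then the product ∏_{i=1}^{k} |2 + (k+1)(α_i − 2)| equals (k+1)^k · |Ψ_k(2 − 2/(k+1))| and is strictly less than 2^k (k+1)^k. -/
/-!
Factoring `-(k+1)` out of every factor gives
`∏ (2 + (k+1)(α_i - 2)) = (-(k+1))^k ∏ (y - α_i) = (-(k+1))^k Ψ_k(y)` with `y = 2 - 2/(k+1)`,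
a real point of `[0, 2]`. There `Ψ_k(y) = y^k - ∑_{i<k} y^i` lies between `-(2^k - 1)` and
`2^k - 1`, since `0 ≤ y^i ≤ 2^i` and `∑_{i<k} 2^i = 2^k - 1`.
-/

theorem map_psiFun {R S : Type*} [CommRing R] [CommRing S] (f : R →+* S) (k : ℕ) (x : R) :
    f (psiFun k x) = psiFun k (f x) := by
  simp only [psiFun, map_sub, map_pow, map_sum]

theorem abs_psiFun_lt_two_pow {k : ℕ} (hk : 1 ≤ k) {y : ℝ} (hy₀ : 0 ≤ y) (hy₂ : y ≤ 2) :
    |psiFun k y| < 2 ^ k := by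
  have hpow : y ^ k ≤ 2 ^ k := pow_le_pow_left₀ hy₀ hy₂ k
  have hgeom : ∑ i ∈ Finset.range k, y ^ i ≤ 2 ^ k - 1 := by
    calc ∑ i ∈ Finset.range k, y ^ i ≤ ∑ i ∈ Finset.range k, (2 : ℝ) ^ i :=
          Finset.sum_le_sum fun i _ => pow_le_pow_left₀ hy₀ hy₂ i
      _ = 2 ^ k - 1 := by rw [geom_sum_eq (by norm_num)]; ring
  have hone : 1 ≤ ∑ i ∈ Finset.range k, y ^ i := by
    obtain ⟨m, rfl⟩ := Nat.exists_eq_add_of_le' hk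
    rw [Finset.sum_range_succ', pow_zero, le_add_iff_nonneg_left]
    exact Finset.sum_nonneg fun i _ => pow_nonneg hy₀ _
  rw [psiFun, abs_lt]
  constructor <;> nlinarith [pow_nonneg hy₀ k]

theorem Finset.prod_add_mul_sub_eq {ι K : Type*} [Field K] (s : Finset ι) (α : ι → K)
    {c : K} (hc : c ≠ 0) (a b : K) :
    ∏ i ∈ s, (a + c * (α i - b)) = (-c) ^ s.card * ∏ i ∈ s, (b - a / c - α i) := by
  rw [← Finset.prod_const, ← Finset.prod_mul_distrib]
  refine Finset.prod_congr rfl fun i _ => ?_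
  field_simp
  ring

/-- For `k ≥ 2`, if `α_1, …, α_k` are the complex roots of `Ψ_k`
(so that `Ψ_k(x) = ∏_{i=1}^k (x - α_i)` for all `x`), then
`∏_{i=1}^k |2 + (k+1)(α_i - 2)| = (k+1)^k |Ψ_k(2 - 2/(k+1))| < 2^k (k+1)^k`. -/
theorem prod_abs_denom_eq (k : ℕ) (hk : 2 ≤ k) (α : Fin k → ℂ)
    (hroots : ∀ x : ℂ, psiFun k x = ∏ i, (x - α i)) :
    (∏ i, ‖2 + (k + 1 : ℂ) * (α i - 2)‖) =
      (k + 1 : ℝ) ^ k * ‖psiFun k (2 - 2 / (k + 1 : ℂ))‖ ∧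
    (∏ i, ‖2 + (k + 1 : ℂ) * (α i - 2)‖) < 2 ^ k * (k + 1 : ℝ) ^ k := by
  have hc : (k + 1 : ℂ) ≠ 0 := by exact_mod_cast k.succ_ne_zero
  have hprod : ∏ i, (2 + (k + 1 : ℂ) * (α i - 2)) =
      (-(k + 1 : ℂ)) ^ k * psiFun k (2 - 2 / (k + 1 : ℂ)) := by
    rw [Finset.prod_add_mul_sub_eq _ _ hc, Finset.card_univ, Fintype.card_fin, hroots]
  have heq : (∏ i, ‖2 + (k + 1 : ℂ) * (α i - 2)‖) =
      (k + 1 : ℝ) ^ k * ‖psiFun k (2 - 2 / (k + 1 : ℂ))‖ := by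
    rw [← norm_prod, hprod, norm_mul, norm_pow, norm_neg]
    norm_cast
  have hreal : psiFun k (2 - 2 / (k + 1 : ℂ)) =
      ((psiFun k (2 - 2 / (k + 1 : ℝ)) : ℝ) : ℂ) := by
    rw [← Complex.ofRealHom_eq_coe, map_psiFun]
    simp
  have hbound : |psiFun k (2 - 2 / (k + 1 : ℝ))| < 2 ^ k := by
    have hle : 2 / (k + 1 : ℝ) ≤ 2 := div_le_self zero_le_two (by linarith [k.cast_nonneg (α := ℝ)])
    exact abs_psiFun_lt_two_pow (by omega) (sub_nonneg.2 hle) (sub_le_self _ (by positivity))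
  refine ⟨heq, ?_⟩
  rw [heq, hreal, Complex.norm_real, Real.norm_eq_abs, mul_comm]
  gcongr
end

section
/- Let k ≥ 2 be an integer, let α be a real number with Ψ_k(α) = 0 and 2(1 − 2^{−k}) < α < 2, and let n be an integer with 2 ≤ n < 2^{k/2}. Then |α^{n−1} − 2^{n−1}| < 2^n / 2^{k/2}. -/
/-! With `m = n - 1`: by the mean value bound `|α^m - 2^m| ≤ (2 - α) m 2^(m-1)` and
`2 - α < 2^(1-k)`, the difference is at most `m 2^m / 2^k`, and `m < 2^(k/2)`. -/

lemma abs_pow_sub_two_pow_le {x : ℝ} (hx₀ : 0 ≤ x) (hx₂ : x ≤ 2) (m : ℕ) :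
    |x ^ m - 2 ^ m| ≤ (2 - x) * m * 2 ^ (m - 1) := by
  simpa [abs_of_nonneg hx₀, abs_of_nonpos (sub_nonpos.2 hx₂), hx₂] using
    abs_pow_sub_pow_le x 2 m

lemma natCast_mul_two_pow_pred_mul_two (m : ℕ) :
    (m : ℝ) * 2 ^ (m - 1) * 2 = m * 2 ^ m := by
  cases m with
  | zero => simp
  | succ m => rw [Nat.add_sub_cancel, pow_succ, mul_assoc]

lemma abs_pow_pred_sub_two_pow_pred_lt {x t : ℝ} {n : ℕ} (hx₀ : 0 ≤ x)
    (hx : 2 * (1 - (t ^ 2)⁻¹) < x) (hx₂ : x ≤ 2) (hn : (n : ℝ) < t) :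
    |x ^ (n - 1) - 2 ^ (n - 1)| < 2 ^ n / t := by
  have ht : 0 < t := (Nat.cast_nonneg n).trans_lt hn
  have hgap : 2 - x ≤ 2 * (t ^ 2)⁻¹ := by linarith
  have hmn : ((n - 1 : ℕ) : ℝ) ≤ n := by exact_mod_cast Nat.sub_le n 1
  calc |x ^ (n - 1) - 2 ^ (n - 1)|
      ≤ (2 - x) * (n - 1 : ℕ) * 2 ^ (n - 1 - 1) := abs_pow_sub_two_pow_le hx₀ hx₂ _
    _ ≤ 2 * (t ^ 2)⁻¹ * (n - 1 : ℕ) * 2 ^ (n - 1 - 1) := by gcongr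
    _ = (t ^ 2)⁻¹ * ((n - 1 : ℕ) * 2 ^ (n - 1)) := by
      rw [← natCast_mul_two_pow_pred_mul_two]; ring
    _ ≤ (t ^ 2)⁻¹ * (n * 2 ^ (n - 1)) := by gcongr
    _ < (t ^ 2)⁻¹ * (t * 2 ^ (n - 1)) := by gcongr
    _ = 2 ^ (n - 1) / t := by field_simp
    _ ≤ 2 ^ n / t := by gcongr <;> norm_num

theorem abs_pow_sub_pow_lt_general (k n : ℕ) (α : ℝ)
    (hα₁ : 2 * (1 - 2 ^ (-(k : ℝ))) < α) (hα₂ : α < 2)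
    (hn₂ : (n : ℝ) < 2 ^ ((k : ℝ) / 2)) :
    |α ^ (n - 1) - 2 ^ (n - 1)| < 2 ^ n / 2 ^ ((k : ℝ) / 2) := by
  have hpow : (2 : ℝ) ^ (-(k : ℝ)) = (((2 : ℝ) ^ ((k : ℝ) / 2)) ^ 2)⁻¹ := by
    rw [Real.rpow_neg zero_le_two, ← Real.rpow_natCast, ← Real.rpow_mul zero_le_two]
    norm_num
  have hα₀ : 0 ≤ α := by
    have : (2 : ℝ) ^ (-(k : ℝ)) ≤ 1 :=
      Real.rpow_le_one_of_one_le_of_nonpos one_le_two (by simp)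
    linarith
  rw [hpow] at hα₁
  exact abs_pow_pred_sub_two_pow_pred_lt hα₀ hα₁ hα₂.le hn₂

/-- For `k ≥ 2`, the real root `α` of `Ψ_k` with `2(1 - 2^{-k}) < α < 2`, and an integer
`n` with `2 ≤ n < 2^{k/2}`, one has `|α^{n-1} - 2^{n-1}| < 2^n / 2^{k/2}`. -/
theorem abs_pow_sub_pow_lt (k n : ℕ) (hk : 2 ≤ k) (α : ℝ) (hroot : psiFun k α = 0)
    (hα₁ : 2 * (1 - 2 ^ (-(k : ℝ))) < α) (hα₂ : α < 2)
    (hn₁ : 2 ≤ n) (hn₂ : (n : ℝ) < 2 ^ ((k : ℝ) / 2)) :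
    |α ^ (n - 1) - 2 ^ (n - 1)| < 2 ^ n / 2 ^ ((k : ℝ) / 2) :=
  abs_pow_sub_pow_lt_general k n α hα₁ hα₂ hn₂
end

section
/- Let k ≥ 2 be an integer and let α be a real number with Ψ_k(α) = 0 and 2(1 − 2^{−k}) < α < 2. Then |f_k(α) − 1/2| < 2k/2^k. -/
/-! Write `ε = 2 - α`, so that `0 < ε < 2 / 2^k`. Then
`f_k(α) - 1/2 = (k - 1) ε / (2 (2 - (k + 1) ε))`, and `(k + 1) ε < 2 (k + 1) / 2^k ≤ 3/2`
keeps the denominator at least `1`; hence `|f_k(α) - 1/2| ≤ (k - 1) ε < 2k / 2^k`. -/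

lemma four_mul_succ_le_three_mul_two_pow {k : ℕ} (hk : 2 ≤ k) : 4 * (k + 1) ≤ 3 * 2 ^ k := by
  induction k, hk using Nat.le_induction with
  | base => norm_num
  | succ n _ ih => rw [pow_succ]; omega

lemma fk_sub_half (k : ℕ) {x : ℝ} (hD : 2 + (k + 1) * (x - 2) ≠ 0) :
    fk k x - 1 / 2 = (k - 1) * (2 - x) / (2 * (2 + (k + 1) * (x - 2))) := by
  rw [fk]
  field_simp
  ring

lemma abs_fk_sub_half_le {k : ℕ} (hk : 1 ≤ k) {x : ℝ} (hx : x ≤ 2)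
    (hkx : (k + 1) * (2 - x) ≤ 3 / 2) : |fk k x - 1 / 2| ≤ (k - 1) * (2 - x) := by
  have hD : 1 ≤ 2 * (2 + (k + 1) * (x - 2)) := by linarith
  have hN : 0 ≤ ((k : ℝ) - 1) * (2 - x) := by
    have : (1 : ℝ) ≤ k := by exact_mod_cast hk
    exact mul_nonneg (by linarith) (by linarith)
  rw [fk_sub_half k (by linarith), abs_of_nonneg (div_nonneg hN (by linarith))]
  exact div_le_self hN hD

theorem abs_fk_sub_half_lt_general (k : ℕ) (hk : 2 ≤ k) (α : ℝ)
    (hα₁ : 2 * (1 - 2 ^ (-(k : ℝ))) < α) (hα₂ : α < 2) :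
    |fk k α - 1 / 2| < 2 * (k : ℝ) / 2 ^ k := by
  have h2k : (0 : ℝ) < 2 ^ k := by positivity
  have hε : 2 - α < 2 / 2 ^ k := by
    rw [Real.rpow_neg zero_le_two, Real.rpow_natCast] at hα₁
    rw [div_eq_mul_inv]
    linarith
  have hkε : (k + 1) * (2 - α) ≤ 3 / 2 := by
    have hcast : (4 : ℝ) * (k + 1) ≤ 3 * 2 ^ k := by
      exact_mod_cast four_mul_succ_le_three_mul_two_pow hk
    calc ((k : ℝ) + 1) * (2 - α) ≤ (k + 1) * (2 / 2 ^ k) := by gcongr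
      _ ≤ 3 / 2 := by rw [mul_div_assoc', div_le_div_iff₀ h2k two_pos]; linarith
  have hk1 : (1 : ℝ) ≤ k := by exact_mod_cast (by omega : 1 ≤ k)
  calc |fk k α - 1 / 2| ≤ (k - 1) * (2 - α) := abs_fk_sub_half_le (by omega) hα₂.le hkε
    _ ≤ (k - 1) * (2 / 2 ^ k) := by gcongr
    _ < 2 * k / 2 ^ k := by rw [mul_div_assoc', div_lt_div_iff_of_pos_right h2k]; linarith

/-- For `k ≥ 2` and the real root `α` of `Ψ_k` with `2(1 - 2^{-k}) < α < 2`, one has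
`|f_k(α) - 1/2| < 2k / 2^k`. -/
theorem abs_fk_sub_half_lt (k : ℕ) (hk : 2 ≤ k) (α : ℝ) (hroot : psiFun k α = 0)
    (hα₁ : 2 * (1 - 2 ^ (-(k : ℝ))) < α) (hα₂ : α < 2) :
    |fk k α - 1 / 2| < 2 * (k : ℝ) / 2 ^ k :=
  abs_fk_sub_half_lt_general k hk α hα₁ hα₂
end
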